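/- Let F(f) = c₀·f^n + c₁·f^{n-1} + ... + c_k·f^{n-k} + c_{k+1} be a polynomial with n > 1, 0 ≤ n-k ≤ 1, and c₀ > c_{k+1}. If f : ℝ → ℝ is a C² nonnegative bounded function with bounded second derivative satisfying f''(x) ≥ F(f(x)) for all x ∈ ℝ, then F(sup f) ≤ 0. -/

import Mathlib

/-!
A one-dimensional Omori–Yau maximum principle: if `f` is bounded above, the penalized function
`f y - ε / 2 * (y - x₀) ^ 2` attains its maximum at some `x`, where `f x ≥ f x₀` and `f'' x ≤ ε`.
Choosing `f x₀` close to `sup f` and `ε < F (sup f)`, continuity of `F` makes `F (f x) > ε`,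
contradicting `F (f x) ≤ f'' x`.
-/

open Filter Set Topology

theorem IsLocalMax.deriv_deriv_nonpos {f : ℝ → ℝ} {x : ℝ} (hmax : IsLocalMax f x)
    (hc : ContinuousAt f x) : deriv (deriv f) x ≤ 0 := by
  by_contra! hpos
  have hmin : IsLocalMin f x := isLocalMin_of_deriv_deriv_pos hpos hmax.deriv_eq_zero hc
  have hconst : f =ᶠ[𝓝 x] fun _ => f x :=
    (hmin.and hmax).mono fun y hy => le_antisymm hy.2 hy.1
  have hderiv : deriv f =ᶠ[𝓝 x] fun _ => 0 := by
    simpa using hconst.deriv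
  simp [hderiv.deriv_eq] at hpos

theorem exists_apply_ge_and_deriv_deriv_le {f : ℝ → ℝ} (hf : Differentiable ℝ f)
    (hbdd : BddAbove (range f)) (x₀ : ℝ) {ε : ℝ} (hε : 0 < ε) :
    ∃ x, f x₀ ≤ f x ∧ deriv (deriv f) x ≤ ε := by
  obtain ⟨C, hC⟩ := hbdd
  set h : ℝ → ℝ := fun y => f y - ε / 2 * (y - x₀) ^ 2
  have hh : Continuous h := hf.continuous.sub (by fun_prop)
  have hlim : Tendsto h (cocompact ℝ) atBot := by
    have hsq : Tendsto (fun y : ℝ => (y - x₀) ^ 2) (cocompact ℝ) atTop := by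
      simpa [Real.dist_eq, sq_abs, Function.comp_def] using
        (tendsto_pow_atTop two_ne_zero).comp (tendsto_dist_right_cocompact_atTop x₀)
    refine tendsto_atBot_mono (fun y => ?_) (tendsto_atBot_add_const_left _ C
      (hsq.const_mul_atTop_of_neg (neg_neg_of_pos (half_pos hε))))
    simp only [h]
    linarith [hC (mem_range_self y)]
  obtain ⟨x, hx⟩ := hh.exists_forall_ge hlim
  refine ⟨x, ?_, ?_⟩
  · simpa [h] using (hx x₀).trans (sub_le_self _ (by positivity))
  have hdh : deriv h = fun y => deriv f y - ε * (y - x₀) := by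
    ext y
    refine (((hf y).hasDerivAt.fun_sub
      ((((hasDerivAt_id' y).sub_const x₀).pow 2).const_mul (ε / 2))).congr_deriv ?_).deriv
    norm_num
    ring
  by_cases hd : DifferentiableAt ℝ (deriv f) x
  · have hmax := IsLocalMax.deriv_deriv_nonpos (Eventually.of_forall hx) hh.continuousAt
    have hdh' : HasDerivAt (fun y => deriv f y - ε * (y - x₀)) (deriv (deriv f) x - ε) x := by
      simpa using hd.hasDerivAt.fun_sub (((hasDerivAt_id' x).sub_const x₀).const_mul ε)
    rw [hdh, hdh'.deriv] at hmax
    linarith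
  · rw [deriv_zero_of_not_differentiableAt hd]
    exact hε.le

theorem apply_sSup_range_nonpos_of_le_deriv_deriv {F f : ℝ → ℝ}
    (hF : ContinuousAt F (sSup (range f))) (hf : Differentiable ℝ f) (hbdd : BddAbove (range f))
    (hineq : ∀ x, F (f x) ≤ deriv (deriv f) x) : F (sSup (range f)) ≤ 0 := by
  set M := sSup (range f)
  by_contra! hpos
  have hnear : ∀ᶠ y in 𝓝[≤] M, F M / 2 < F y :=
    nhdsWithin_le_nhds (hF.eventually (lt_mem_nhds (half_lt_self hpos)))
  obtain ⟨l, hlM, hl⟩ := mem_nhdsLE_iff_exists_Ioc_subset.mp hnear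
  obtain ⟨_, ⟨x₀, rfl⟩, hx₀⟩ := exists_lt_of_lt_csSup (range_nonempty f) hlM
  obtain ⟨x, hx₀x, hx⟩ := exists_apply_ge_and_deriv_deriv_le hf hbdd x₀ (half_pos hpos)
  have hFx : F M / 2 < F (f x) := hl ⟨hx₀.trans_le hx₀x, le_csSup hbdd (mem_range_self x)⟩
  linarith [hineq x]

theorem stmt_18_general (n k : ℕ)
    (c : ℕ → ℝ)
    (F : ℝ → ℝ)
    (hF : ∀ x, F x = ∑ i ∈ Finset.range (k + 1), c i * x ^ (n - i) + c (k + 1))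
    (f : ℝ → ℝ) (hf : ContDiff ℝ 2 f)
    (hfbdd : ∃ C, ∀ x, f x ≤ C)
    (hineq : ∀ x, F (f x) ≤ deriv (deriv f) x) :
    F (sSup (Set.range f)) ≤ 0 := by
  have hFc : Continuous F := by
    rw [funext hF]
    fun_prop
  obtain ⟨C, hC⟩ := hfbdd
  exact apply_sSup_range_nonpos_of_le_deriv_deriv hFc.continuousAt
    (hf.differentiable (by norm_num)) ⟨C, forall_mem_range.mpr hC⟩ hineq

theorem stmt_18 (n k : ℕ) (hn : 1 < n) (hk : k ≤ n) (hnk : n - k ≤ 1)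
    (c : ℕ → ℝ) (hc : c 0 > c (k + 1))
    (F : ℝ → ℝ)
    (hF : ∀ x, F x = ∑ i ∈ Finset.range (k + 1), c i * x ^ (n - i) + c (k + 1))
    (f : ℝ → ℝ) (hf : ContDiff ℝ 2 f) (hf0 : ∀ x, 0 ≤ f x)
    (hfbdd : ∃ C, ∀ x, f x ≤ C)
    (hf2bdd : ∃ C, ∀ x, |deriv (deriv f) x| ≤ C)
    (hineq : ∀ x, F (f x) ≤ deriv (deriv f) x) :
    F (sSup (Set.range f)) ≤ 0 :=
  stmt_18_general n k c F hF f hf hfbdd hineq
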